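/- arXiv:0810.2830 — 12 statements merged into one kernel-verified Lean document; each statement's English description precedes it below -/
import Mathlib

section
/- Let q be a prime power, d a divisor of q-1, u a positive integer, and h a polynomial over F_q. Then f(x) = x^u · h(x^((q-1)/d)) permutes F_q if and only if both: (1) gcd(u, (q-1)/d) = 1, and (2) the map x ↦ x^u · h(x)^((q-1)/d) permutes the set μ_d of d-th roots of unity in F_q^*. -/
/-! With `s = (q - 1) / d` and `g x = x ^ u * h(x) ^ s` we have `f a ^ s = g (a ^ s)`, and
since `F_q^*` is cyclic, `a ↦ a ^ s` maps `F_q^*` onto `μ_d`. Hence a bijective `f` makes `g` map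
`μ_d` onto itself, and `f ζ = f 1` for `ζ` of prime order dividing `gcd(u, s)` forces that gcd to
be `1`. Conversely, `f a = f b` gives `a ^ s = b ^ s` by injectivity of `g` on `μ_d`, then
`a ^ u = b ^ u`, so `a = b`. -/

open Polynomial Function Set

theorem IsCyclic.exists_pow_eq_of_pow_eq_one {G : Type*} [CommGroup G] [IsCyclic G] [Finite G]
    {d s : ℕ} (hcard : Nat.card G = d * s) {x : G} (hx : x ^ d = 1) : ∃ y, y ^ s = x := by
  have hs : s ≠ 0 := by
    rintro rfl
    exact Nat.card_pos.ne' (by rw [hcard, mul_zero])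
  have hle : (powMonoidHom s : G →* G).range ≤ (powMonoidHom d).ker := by
    rintro _ ⟨y, rfl⟩
    simp only [MonoidHom.mem_ker, powMonoidHom_apply, ← pow_mul', ← hcard, pow_card_eq_one']
  have hrange : (powMonoidHom s : G →* G).range = (powMonoidHom d).ker := by
    refine Subgroup.eq_of_le_of_card_ge hle ?_
    rw [IsCyclic.card_powMonoidHom_range, IsCyclic.card_powMonoidHom_ker, hcard,
      Nat.gcd_mul_right_left, Nat.gcd_mul_left_left, Nat.mul_div_cancel _ (Nat.pos_of_ne_zero hs)]
  exact (hrange ▸ hx : x ∈ (powMonoidHom s : G →* G).range)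

theorem exists_ne_one_pow_eq_one_of_gcd_ne_one {G : Type*} [Group G] [Finite G] {u s : ℕ}
    (hs : s ∣ Nat.card G) (hus : u.gcd s ≠ 1) :
    ∃ ζ : G, ζ ≠ 1 ∧ ζ ^ u = 1 ∧ ζ ^ s = 1 := by
  obtain ⟨p, hp, hpus⟩ := Nat.exists_prime_and_dvd hus
  have : Fact p.Prime := ⟨hp⟩
  obtain ⟨ζ, hζ⟩ :=
    exists_prime_orderOf_dvd_card' p ((hpus.trans (Nat.gcd_dvd_right u s)).trans hs)
  refine ⟨ζ, fun h1 => hp.one_lt.ne (by rw [← hζ, h1, orderOf_one]), pow_gcd_eq_one.mp ?_⟩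
  exact orderOf_dvd_iff_pow_eq_one.mp (hζ ▸ hpus)

theorem eq_of_pow_eq_pow_of_coprime {M : Type*} [CommGroupWithZero M] {a b : M} {m n : ℕ}
    (hmn : m.Coprime n) (hb : b ≠ 0) (hm : a ^ m = b ^ m) (hn : a ^ n = b ^ n) : a = b := by
  have hbm := pow_ne_zero m hb
  have hbn := pow_ne_zero n hb
  have : a / b = 1 := (pow_eq_one_iff_of_coprime hmn).mp
    ⟨by rw [div_pow, hm, div_self hbm], by rw [div_pow, hn, div_self hbn]⟩
  exact div_eq_one_iff_eq hb |>.mp this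

namespace FiniteField

variable {F : Type*} [Field F] [Fintype F] {d s : ℕ}

theorem pow_pow_eq_one_of_ne_zero (hds : d * s = Fintype.card F - 1) {a : F} (ha : a ≠ 0) :
    (a ^ s) ^ d = 1 := by
  rw [← pow_mul, mul_comm, hds, pow_card_sub_one_eq_one a ha]

theorem exists_ne_zero_pow_eq_of_pow_eq_one (hds : d * s = Fintype.card F - 1) {x : F}
    (hx : x ^ d = 1) : ∃ a : F, a ≠ 0 ∧ a ^ s = x := by
  have hd : d ≠ 0 := left_ne_zero_of_mul (hds ▸ (tsub_pos_of_lt Fintype.one_lt_card).ne')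
  obtain ⟨y, hy⟩ :=
    IsCyclic.exists_pow_eq_of_pow_eq_one (x := (IsUnit.of_pow_eq_one hx hd).unit)
      (by rw [Nat.card_units, Nat.card_eq_fintype_card, hds])
      (Units.ext (by simpa using hx))
  exact ⟨y, y.ne_zero, by simpa using congrArg Units.val hy⟩

end FiniteField

section PermutationCriterion

variable {F : Type*} [Field F] [Fintype F] {h : F[X]} {d s u : ℕ}

theorem coprime_of_injective_pow_mul_eval_pow (hs : s ∣ Fintype.card F - 1)
    (hf : Injective fun a : F => a ^ u * h.eval (a ^ s)) : u.Coprime s := by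
  by_contra hus
  obtain ⟨ζ, hζ1, hζu, hζs⟩ := exists_ne_one_pow_eq_one_of_gcd_ne_one (G := Fˣ)
    (by rwa [Nat.card_units, Nat.card_eq_fintype_card]) hus
  refine hζ1 (Units.ext (hf ?_))
  simp only [← Units.val_pow_eq_pow_val, hζu, hζs, Units.val_one, one_pow]

theorem bijOn_pow_mul_eval_pow_of_bijective (hds : d * s = Fintype.card F - 1) (hu : u ≠ 0)
    (hf : Bijective fun a : F => a ^ u * h.eval (a ^ s)) :
    BijOn (fun x : F => x ^ u * h.eval x ^ s) {x | x ^ d = 1} {x | x ^ d = 1} := by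
  set f := fun a : F => a ^ u * h.eval (a ^ s)
  have hf0 : f 0 = 0 := by simp [f, hu]
  have hpow (a : F) : f a ^ s = (a ^ s) ^ u * h.eval (a ^ s) ^ s := by simp only [f]; ring
  have hmaps : MapsTo (fun x : F => x ^ u * h.eval x ^ s) {x | x ^ d = 1} {x | x ^ d = 1} := by
    intro x hx
    obtain ⟨a, ha, rfl⟩ := FiniteField.exists_ne_zero_pow_eq_of_pow_eq_one hds hx
    have hfa : f a ≠ 0 := fun h0 => ha (hf.injective (h0.trans hf0.symm))
    simpa only [mem_ofPred_eq, ← hpow] using FiniteField.pow_pow_eq_one_of_ne_zero hds hfa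
  refine (Set.toFinite _).surjOn_iff_bijOn_of_mapsTo hmaps |>.mp fun y hy => ?_
  obtain ⟨c, hc, rfl⟩ := FiniteField.exists_ne_zero_pow_eq_of_pow_eq_one hds hy
  obtain ⟨a, rfl⟩ := hf.surjective c
  have ha : a ≠ 0 := by rintro rfl; exact hc hf0
  exact ⟨a ^ s, FiniteField.pow_pow_eq_one_of_ne_zero hds ha, (hpow a).symm⟩

theorem injective_pow_mul_eval_pow_of_bijOn (hds : d * s = Fintype.card F - 1) (hu : u ≠ 0)
    (hus : u.Coprime s)
    (hg : BijOn (fun x : F => x ^ u * h.eval x ^ s) {x | x ^ d = 1} {x | x ^ d = 1}) :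
    Injective fun a : F => a ^ u * h.eval (a ^ s) := by
  set f := fun a : F => a ^ u * h.eval (a ^ s)
  have hf0 : f 0 = 0 := by simp [f, hu]
  have hpow (a : F) : f a ^ s = (a ^ s) ^ u * h.eval (a ^ s) ^ s := by simp only [f]; ring
  have hds0 : d * s ≠ 0 := hds ▸ (tsub_pos_of_lt Fintype.one_lt_card).ne'
  have hfa {a : F} (ha : a ≠ 0) : f a ≠ 0 := by
    intro h0
    have := hg.mapsTo (FiniteField.pow_pow_eq_one_of_ne_zero hds ha)
    rw [mem_ofPred_eq, ← hpow, h0, ← pow_mul, zero_pow (mul_comm s d ▸ hds0)] at this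
    exact zero_ne_one this
  intro a b hab
  rcases eq_or_ne a 0 with rfl | ha <;> rcases eq_or_ne b 0 with rfl | hb
  · rfl
  · exact absurd (hab.symm.trans hf0) (hfa hb)
  · exact absurd (hab.trans hf0) (hfa ha)
  · have hs : a ^ s = b ^ s := hg.injOn (FiniteField.pow_pow_eq_one_of_ne_zero hds ha)
      (FiniteField.pow_pow_eq_one_of_ne_zero hds hb)
      (by simpa only [← hpow] using congrArg (· ^ s) hab)
    have hh : h.eval (a ^ s) ≠ 0 := fun h0 => hfa ha (by simp [f, h0])
    have hu' : a ^ u = b ^ u := mul_right_cancel₀ hh (hab.trans (by simp only [f, hs]))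
    exact eq_of_pow_eq_pow_of_coprime hus hb hu' hs

end PermutationCriterion

/-- Lemma 2 (cyclotomy lemma): `f(x) = x^u h(x^((q-1)/d))` permutes `F_q` iff
`gcd(u,(q-1)/d) = 1` and `x ↦ x^u h(x)^((q-1)/d)` permutes the `d`-th roots of unity. -/
theorem stmt_0 (F : Type*) [Field F] [Fintype F] (d u : ℕ)
    (hd : d ∣ Fintype.card F - 1) (hu : 0 < u) (h : Polynomial F) :
    Function.Bijective
        (fun a : F => a ^ u * h.eval (a ^ ((Fintype.card F - 1) / d))) ↔
      (Nat.gcd u ((Fintype.card F - 1) / d) = 1 ∧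
        Set.BijOn (fun x : F => x ^ u * (h.eval x) ^ ((Fintype.card F - 1) / d))
          {x : F | x ^ d = 1} {x : F | x ^ d = 1}) := by
  set s := (Fintype.card F - 1) / d
  have hds : d * s = Fintype.card F - 1 := Nat.mul_div_cancel' hd
  constructor
  · intro hf
    exact ⟨coprime_of_injective_pow_mul_eval_pow (Dvd.intro_left d hds) hf.injective,
      bijOn_pow_mul_eval_pow_of_bijective hds hu.ne' hf⟩
  · rintro ⟨hus, hg⟩
    exact Finite.injective_iff_bijective.mp
      (injective_pow_mul_eval_pow_of_bijOn hds hu.ne' hus hg)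
end

section
/- Let q be a prime power, d > 2 a divisor of q-1, u ≥ 1 and k ≥ 0 integers, b ∈ F_q, and g ∈ F_q[x] a polynomial divisible by h_d(x) = x^(d-1) + x^(d-2) + ... + x + 1. Then f(x) = x^u (b·x^(k(q-1)/d) + g(x^((q-1)/d))) permutes F_q if and only if: (1) gcd(u, (q-1)/d) = 1, (2) gcd(d, u + k(q-1)/d) = 1, (3) b ≠ 0, and (4) 1 + g(1)/b is a d-th power in F_q^*. -/
open Polynomial

private lemma pow_gcd_eq_one' {M : Type*} [Monoid M] {z : M} {a b : ℕ}
    (ha : z ^ a = 1) (hb : z ^ b = 1) : z ^ Nat.gcd a b = 1 := by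
  rw [← orderOf_dvd_iff_pow_eq_one] at ha hb ⊢
  exact Nat.dvd_gcd ha hb

private lemma geom_eval_zero' {F : Type*} [Field F] {d : ℕ} {ζ : F}
    (h1 : ζ ≠ 1) (hζ : ζ ^ d = 1) :
    (∑ i ∈ Finset.range d, (X : F[X]) ^ i).eval ζ = 0 := by
  have h := geom_sum_mul ζ d
  rw [hζ, sub_self] at h
  have h2 : (∑ i ∈ Finset.range d, ζ ^ i) = 0 := by
    rcases mul_eq_zero.mp h with h' | h'
    · exact h'
    · exact absurd (sub_eq_zero.mp h') h1
  simpa [eval_geom_sum] using h2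

private lemma dth_power_iff' {F : Type*} [Field F] [Fintype F] {d s : ℕ}
    (hds : d * s = Fintype.card F - 1) (hs : 0 < s) (w : F) :
    (∃ y : F, y ≠ 0 ∧ y ^ d = w) ↔ w ≠ 0 ∧ w ^ s = 1 := by
  classical
  constructor
  · rintro ⟨y, hy0, rfl⟩
    refine ⟨pow_ne_zero _ hy0, ?_⟩
    rw [← pow_mul, hds]
    exact FiniteField.pow_card_sub_one_eq_one y hy0
  · rintro ⟨hw0, hws⟩
    obtain ⟨gen, hgen⟩ := IsCyclic.exists_generator (α := Fˣ)
    obtain ⟨m, hm⟩ := hgen (Units.mk0 w hw0)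
    simp only [] at hm
    have hordg : orderOf gen = Fintype.card F - 1 := by
      rw [orderOf_eq_card_of_forall_mem_zpowers hgen, Nat.card_eq_fintype_card,
        Fintype.card_units]
    have h1 : gen ^ (m * (s : ℤ)) = 1 := by
      rw [zpow_mul, hm, zpow_natCast]
      ext
      push_cast
      exact hws
    have hdvd : ((d : ℤ) * (s : ℤ)) ∣ m * (s : ℤ) := by
      have := orderOf_dvd_iff_zpow_eq_one.mpr h1
      rw [hordg] at this
      rw [show ((d : ℤ) * (s : ℤ)) = ((Fintype.card F - 1 : ℕ) : ℤ) by
        push_cast [← hds]; ring]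
      exact this
    have hdm : (d : ℤ) ∣ m :=
      (mul_dvd_mul_iff_right (by exact_mod_cast hs.ne' : (s : ℤ) ≠ 0)).mp hdvd
    obtain ⟨t, ht⟩ := hdm
    refine ⟨((gen ^ t : Fˣ) : F), Units.ne_zero _, ?_⟩
    have : ((gen ^ t) ^ (d : ℕ) : Fˣ) = Units.mk0 w hw0 := by
      rw [← zpow_natCast (gen ^ t) d, ← zpow_mul, ← hm, ht]
      ring_nf
    calc ((gen ^ t : Fˣ) : F) ^ d = (((gen ^ t) ^ (d : ℕ) : Fˣ) : F) := by
          push_cast; ring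
      _ = w := by rw [this]; rfl

private lemma exists_orderOf_eq' {F : Type*} [Field F] [Fintype F] {e : ℕ}
    (he : e ∣ Fintype.card F - 1) (h1 : 0 < Fintype.card F - 1) :
    ∃ x : F, x ≠ 0 ∧ orderOf x = e := by
  classical
  obtain ⟨gen, hgen⟩ := IsCyclic.exists_generator (α := Fˣ)
  have hordg : orderOf gen = Fintype.card F - 1 := by
    rw [orderOf_eq_card_of_forall_mem_zpowers hgen, Nat.card_eq_fintype_card,
      Fintype.card_units]
  refine ⟨((gen ^ ((Fintype.card F - 1) / e) : Fˣ) : F), Units.ne_zero _, ?_⟩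
  rw [orderOf_units, orderOf_pow, hordg,
    Nat.gcd_eq_right (Nat.div_dvd_of_dvd he), Nat.div_div_self he h1.ne']

/-- Theorem 1: permutation polynomials from cyclotomy. -/
theorem stmt_1 (F : Type*) [Field F] [Fintype F] (d u k : ℕ)
    (hd : d ∣ Fintype.card F - 1) (hd2 : 2 < d) (hu : 1 ≤ u)
    (b : F) (g : Polynomial F)
    (hg : (∑ i ∈ Finset.range d, Polynomial.X ^ i) ∣ g) :
    Function.Bijective
        (fun x : F => x ^ u *
          (b * x ^ (k * ((Fintype.card F - 1) / d)) +
            g.eval (x ^ ((Fintype.card F - 1) / d)))) ↔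
      (Nat.gcd u ((Fintype.card F - 1) / d) = 1 ∧
        Nat.gcd d (u + k * ((Fintype.card F - 1) / d)) = 1 ∧
        b ≠ 0 ∧
        ∃ y : F, y ≠ 0 ∧ y ^ d = 1 + g.eval 1 / b) := by
  classical
  obtain ⟨g', hgt⟩ := hg
  set s := (Fintype.card F - 1) / d with hsdef
  have h2q : 1 < Fintype.card F := Fintype.one_lt_card
  have hq1pos : 0 < Fintype.card F - 1 := by omega
  have hds : d * s = Fintype.card F - 1 := Nat.mul_div_cancel' hd
  have hdpos : 0 < d := by omega
  have hspos : 0 < s := Nat.div_pos (Nat.le_of_dvd hq1pos hd) hdpos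
  set v := u + k * s with hvdef
  set c := b + g.eval 1 with hcdef
  set f : F → F := fun x => x ^ u * (b * x ^ (k * s) + g.eval (x ^ s)) with hfdef
  have hsdvd : s ∣ Fintype.card F - 1 := ⟨d, by rw [← hds]; ring⟩
  have hune : u ≠ 0 := by omega
  have hf0 : f 0 = 0 := by simp [hfdef, zero_pow hune]
  have hxq : ∀ x : F, x ≠ 0 → (x ^ s) ^ d = 1 := by
    intro x hx
    rw [← pow_mul, mul_comm s d, hds]
    exact FiniteField.pow_card_sub_one_eq_one x hx
  have evalA : ∀ x : F, x ^ s = 1 → f x = c * x ^ u := by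
    intro x hx
    have hks : x ^ (k * s) = 1 := by
      rw [mul_comm k s, pow_mul, hx, one_pow]
    simp only [hfdef, hx, hks, hcdef]
    ring
  have evalB : ∀ x : F, x ≠ 0 → x ^ s ≠ 1 → f x = b * x ^ v := by
    intro x hx0 hx1
    have hg0 : g.eval (x ^ s) = 0 := by
      rw [hgt, eval_mul, geom_eval_zero' hx1 (hxq x hx0), zero_mul]
    simp only [hfdef, hg0, hvdef]
    rw [add_zero, pow_add]
    ring
  constructor
  · intro hbij
    obtain ⟨γ, hγ0, hγord⟩ := exists_orderOf_eq' (dvd_refl (Fintype.card F - 1)) hq1pos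
    have hγfin : IsOfFinOrder γ := by
      rw [← orderOf_pos_iff, hγord]; exact hq1pos
    have hγs : orderOf (γ ^ s) = d := by
      rw [hγfin.orderOf_pow, hγord, Nat.gcd_eq_right hsdvd, ← hds,
        Nat.mul_div_cancel _ hspos]
    have hγs1 : γ ^ s ≠ 1 := by
      intro h
      rw [h, orderOf_one] at hγs
      omega
    have hγs2 : (γ ^ s) ^ 2 ≠ 1 := by
      intro h
      have h' : orderOf (γ ^ s) ∣ 2 := orderOf_dvd_iff_pow_eq_one.mpr h
      rw [hγs] at h'
      have := Nat.le_of_dvd (by norm_num) h'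
      omega
    have hb : b ≠ 0 := by
      intro hb0
      have h1 : f γ = f 0 := by
        rw [hf0, evalB γ hγ0 hγs1, hb0, zero_mul]
      exact hγ0 (hbij.injective h1)
    have h1 : Nat.gcd u s = 1 := by
      by_contra hne
      have hgd : Nat.gcd u s ∣ Fintype.card F - 1 :=
        (Nat.gcd_dvd_right u s).trans hsdvd
      obtain ⟨x, hx0, hxord⟩ := exists_orderOf_eq' hgd hq1pos
      have hxu : x ^ u = 1 := by
        rw [← orderOf_dvd_iff_pow_eq_one, hxord]; exact Nat.gcd_dvd_left _ _
      have hxs : x ^ s = 1 := by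
        rw [← orderOf_dvd_iff_pow_eq_one, hxord]; exact Nat.gcd_dvd_right _ _
      have hx1 : x ≠ 1 := by
        intro h; rw [h, orderOf_one] at hxord; exact hne hxord.symm
      have heq : f x = f 1 := by
        rw [evalA x hxs, evalA 1 (one_pow s), hxu, one_pow]
      exact hx1 (hbij.injective heq)
    have h2 : Nat.gcd d v = 1 := by
      by_contra hne
      have hgd : Nat.gcd d v ∣ Fintype.card F - 1 :=
        (Nat.gcd_dvd_left d v).trans hd
      obtain ⟨ω, hω0, hωord⟩ := exists_orderOf_eq' hgd hq1pos
      have hωv : ω ^ v = 1 := by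
        rw [← orderOf_dvd_iff_pow_eq_one, hωord]; exact Nat.gcd_dvd_right _ _
      have hω1 : ω ≠ 1 := by
        intro h; rw [h, orderOf_one] at hωord; exact hne hωord.symm
      obtain ⟨x, hx0, hxs, hωxs⟩ : ∃ x : F, x ≠ 0 ∧ x ^ s ≠ 1 ∧ (ω * x) ^ s ≠ 1 := by
        by_cases hcase : (ω * γ) ^ s = 1
        · refine ⟨γ * γ, mul_ne_zero hγ0 hγ0, ?_, ?_⟩
          · intro h
            apply hγs2
            rw [pow_two, ← mul_pow]
            exact h
          · intro h
            apply hγs1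
            have h2' : (ω * γ) ^ s * γ ^ s = 1 := by
              rw [← mul_pow, show ω * γ * γ = ω * (γ * γ) by ring]
              exact h
            rwa [hcase, one_mul] at h2'
        · exact ⟨γ, hγ0, hγs1, hcase⟩
      have heq : f (ω * x) = f x := by
        rw [evalB _ (mul_ne_zero hω0 hx0) hωxs, evalB _ hx0 hxs, mul_pow, hωv, one_mul]
      have hωx := hbij.injective heq
      exact hω1 (mul_right_cancel₀ hx0 (by rw [one_mul]; exact hωx))
    refine ⟨h1, h2, hb, ?_⟩
    obtain ⟨x, hx⟩ := hbij.surjective b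
    have hx0 : x ≠ 0 := by
      intro h; rw [h, hf0] at hx; exact hb hx.symm
    by_cases hxs : x ^ s = 1
    · have hbc : b = c * x ^ u := by rw [← evalA x hxs, hx]
      have hc0 : c ≠ 0 := by
        intro h; rw [h, zero_mul] at hbc; exact hb hbc
      have hbs : b ^ s = c ^ s := by
        rw [hbc, mul_pow, ← pow_mul, mul_comm u s, pow_mul, hxs, one_pow, mul_one]
      have hcb : (1 : F) + g.eval 1 / b = c / b := by
        rw [hcdef]; field_simp
      refine (dth_power_iff' hds hspos _).mpr ⟨?_, ?_⟩
      · rw [hcb]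
        exact div_ne_zero hc0 hb
      · rw [hcb, div_pow, ← hbs, div_self (pow_ne_zero s hb)]
    · exfalso
      have hbv : b = b * x ^ v := by rw [← evalB x hx0 hxs, hx]
      have hxv : x ^ v = 1 := (mul_left_cancel₀ hb (by rw [mul_one]; exact hbv)).symm
      have hxsv : (x ^ s) ^ v = 1 := by
        rw [← pow_mul, mul_comm s v, pow_mul, hxv, one_pow]
      have h3 := pow_gcd_eq_one' (hxq x hx0) hxsv
      rw [h2, pow_one] at h3
      exact hxs h3
  · rintro ⟨h1, h2, hb, y, hy0, hyd⟩
    have hcb : c = b * y ^ d := by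
      rw [hyd, hcdef]; field_simp
    have hc0 : c ≠ 0 := by rw [hcb]; exact mul_ne_zero hb (pow_ne_zero _ hy0)
    have hcs : c ^ s = b ^ s := by
      rw [hcb, mul_pow, ← pow_mul, hds, FiniteField.pow_card_sub_one_eq_one y hy0, mul_one]
    rw [← Finite.injective_iff_bijective]
    intro x x' hxx'
    have hfne : ∀ z : F, z ≠ 0 → f z ≠ 0 := by
      intro z hz
      by_cases hzs : z ^ s = 1
      · rw [evalA z hzs]; exact mul_ne_zero hc0 (pow_ne_zero _ hz)
      · rw [evalB z hz hzs]; exact mul_ne_zero hb (pow_ne_zero _ hz)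
    by_cases hx : x = 0
    · by_cases hx' : x' = 0
      · rw [hx, hx']
      · exact absurd (by rw [← hxx', hx, hf0] : f x' = 0) (hfne x' hx')
    · by_cases hx' : x' = 0
      · exact absurd (by rw [hxx', hx', hf0] : f x = 0) (hfne x hx)
      · have key : ∀ z : F, z ≠ 0 → z ^ s ≠ 1 → (f z) ^ s ≠ b ^ s := by
          intro z hz hzs heq
          rw [evalB z hz hzs, mul_pow, ← pow_mul, mul_comm v s, pow_mul] at heq
          have h3 : (z ^ s) ^ v = 1 :=
            mul_left_cancel₀ (pow_ne_zero s hb) (heq.trans (mul_one (b ^ s)).symm)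
          have h4 := pow_gcd_eq_one' (hxq z hz) h3
          rw [h2, pow_one] at h4
          exact hzs h4
        have keyA : ∀ z : F, z ^ s = 1 → (f z) ^ s = b ^ s := by
          intro z hzs
          rw [evalA z hzs, mul_pow, ← pow_mul, mul_comm u s, pow_mul, hzs, one_pow,
            mul_one, hcs]
        by_cases hxs : x ^ s = 1
        · by_cases hxs' : x' ^ s = 1
          · rw [evalA x hxs, evalA x' hxs'] at hxx'
            have hxu : x ^ u = x' ^ u := mul_left_cancel₀ hc0 hxx'
            have hzu : (x / x') ^ u = 1 := by
              rw [div_pow, hxu, div_self (pow_ne_zero _ hx')]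
            have hzs : (x / x') ^ s = 1 := by
              rw [div_pow, hxs, hxs', div_self one_ne_zero]
            have h5 := pow_gcd_eq_one' hzu hzs
            rw [h1, pow_one] at h5
            field_simp at h5
            exact h5
          · exact absurd (by rw [← hxx']; exact keyA x hxs) (key x' hx' hxs')
        · by_cases hxs' : x' ^ s = 1
          · exact absurd (by rw [hxx']; exact keyA x' hxs') (key x hx hxs)
          · rw [evalB x hx hxs, evalB x' hx' hxs'] at hxx'
            have hxv : x ^ v = x' ^ v := mul_left_cancel₀ hb hxx'
            have hz0 : x / x' ≠ 0 := div_ne_zero hx hx'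
            have hzv : (x / x') ^ v = 1 := by
              rw [div_pow, hxv, div_self (pow_ne_zero _ hx')]
            have hzs : (x / x') ^ s = 1 := by
              have h3 : ((x / x') ^ s) ^ v = 1 := by
                rw [← pow_mul, mul_comm s v, pow_mul, hzv, one_pow]
              have h4 := pow_gcd_eq_one' (hxq (x / x') hz0) h3
              rwa [h2, pow_one] at h4
            have hzu : (x / x') ^ u = 1 := by
              have h6 : (x / x') ^ v = (x / x') ^ u * ((x / x') ^ s) ^ k := by
                rw [hvdef, pow_add, mul_comm k s, pow_mul]
              rw [hzv, hzs, one_pow, mul_one] at h6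
              exact h6.symm
            have h5 := pow_gcd_eq_one' hzu hzs
            rw [h1, pow_one] at h5
            field_simp at h5
            exact h5
end

section
/- Let q = p^n with p prime, let A, B ∈ F_q[x] be additive polynomials (F_p-linear maps on F_q), and let g ∈ F_q[x] be arbitrary. Then f(x) = A(x) + g(B(x)) permutes F_q if and only if A(ker B) + f̂(im B) = F_q, where f̂(x) = g(x) + A(B̂(x)) and B̂ is any polynomial such that B(B̂(γ)) = γ for all γ ∈ im B. -/
/-!
Writing `x = (x - B̂ (B x)) + B̂ (B x)`, with the first summand in `ker B`, shows that the image of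
`f = A + g ∘ B` is exactly `A (ker B) + f̂ (im B)`; on a finite field `f` is a permutation iff it
is surjective.
-/

open Pointwise

theorem Polynomial.eval_add_of_eq_sum_C_mul_X_pow_char_pow {R : Type*} [CommRing R] {p : ℕ}
    [Fact p.Prime] [CharP R p] {P : Polynomial R}
    (hP : ∃ (m : ℕ) (a : ℕ → R),
      P = ∑ i ∈ Finset.range m, Polynomial.C (a i) * Polynomial.X ^ (p ^ i))
    (x y : R) : P.eval (x + y) = P.eval x + P.eval y := by
  obtain ⟨m, a, rfl⟩ := hP
  simp only [Polynomial.eval_finsetSum, Polynomial.eval_mul, Polynomial.eval_C,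
    Polynomial.eval_pow, Polynomial.eval_X, add_pow_char_pow, mul_add, Finset.sum_add_distrib]

theorem range_add_comp_eq_image_ker_add_image_range {G H K : Type*} [AddGroup G]
    [AddCommGroup H] [AddGroup K] (A : G →+ H) (B : G →+ K) (g : K → H) (Bhat : K → G)
    (hBhat : ∀ γ ∈ Set.range B, B (Bhat γ) = γ) :
    Set.range (fun x => A x + g (B x)) =
      A '' {x | B x = 0} + (fun γ => g γ + A (Bhat γ)) '' Set.range B := by
  ext z
  simp only [Set.mem_range, Set.mem_add, Set.mem_image, Set.mem_ofPred_eq]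
  constructor
  · rintro ⟨x, rfl⟩
    have hBx : B (Bhat (B x)) = B x := hBhat _ ⟨x, rfl⟩
    refine ⟨A (x - Bhat (B x)), ⟨x - Bhat (B x), by rw [map_sub, hBx, sub_self], rfl⟩,
      g (B x) + A (Bhat (B x)), ⟨B x, ⟨x, rfl⟩, rfl⟩, ?_⟩
    rw [map_sub]
    abel
  · rintro ⟨_, ⟨k, hk, rfl⟩, _, ⟨_, ⟨x, rfl⟩, rfl⟩, rfl⟩
    refine ⟨k + Bhat (B x), ?_⟩
    rw [map_add, map_add, hk, zero_add, hBhat _ ⟨x, rfl⟩]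
    abel

theorem stmt_3_general (p : ℕ) (hp : p.Prime)
    (F : Type*) [Field F] [Fintype F] (hchar : CharP F p)
    (A B : Polynomial F)
    (hA : ∃ (m : ℕ) (a : ℕ → F),
      A = ∑ i ∈ Finset.range m, Polynomial.C (a i) * Polynomial.X ^ (p ^ i))
    (hB : ∃ (m : ℕ) (a : ℕ → F),
      B = ∑ i ∈ Finset.range m, Polynomial.C (a i) * Polynomial.X ^ (p ^ i))
    (g : Polynomial F)
    (Bhat : Polynomial F)
    (hBhat : ∀ γ ∈ Set.range (fun x : F => B.eval x), B.eval (Bhat.eval γ) = γ) :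
    Function.Bijective (fun x : F => A.eval x + g.eval (B.eval x)) ↔
      ((fun x : F => A.eval x) '' {x : F | B.eval x = 0} +
        (fun x : F => g.eval x + A.eval (Bhat.eval x)) ''
          Set.range (fun x : F => B.eval x)) = Set.univ := by
  have : Fact p.Prime := ⟨hp⟩
  let A' : F →+ F := AddMonoidHom.mk' A.eval (A.eval_add_of_eq_sum_C_mul_X_pow_char_pow hA)
  let B' : F →+ F := AddMonoidHom.mk' B.eval (B.eval_add_of_eq_sum_C_mul_X_pow_char_pow hB)
  have hrange : Set.range (fun x : F => A.eval x + g.eval (B.eval x)) =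
      (fun x : F => A.eval x) '' {x : F | B.eval x = 0} +
        (fun x : F => g.eval x + A.eval (Bhat.eval x)) '' Set.range (fun x : F => B.eval x) :=
    range_add_comp_eq_image_ker_add_image_range A' B' g.eval Bhat.eval hBhat
  rw [← hrange, Set.range_eq_univ, Finite.surjective_iff_bijective]

/-- Proposition (additive cyclotomy): `f(x) = A(x) + g(B(x))` permutes `F_q`
iff `A(ker B) + f̂(im B) = F_q`. -/
theorem stmt_3 (p n : ℕ) (hp : p.Prime) (hn : 0 < n)
    (F : Type*) [Field F] [Fintype F] (hq : Fintype.card F = p ^ n) (hchar : CharP F p)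
    (A B : Polynomial F)
    (hA : ∃ (m : ℕ) (a : ℕ → F),
      A = ∑ i ∈ Finset.range m, Polynomial.C (a i) * Polynomial.X ^ (p ^ i))
    (hB : ∃ (m : ℕ) (a : ℕ → F),
      B = ∑ i ∈ Finset.range m, Polynomial.C (a i) * Polynomial.X ^ (p ^ i))
    (g : Polynomial F)
    (Bhat : Polynomial F)
    (hBhat : ∀ γ ∈ Set.range (fun x : F => B.eval x), B.eval (Bhat.eval γ) = γ) :
    Function.Bijective (fun x : F => A.eval x + g.eval (B.eval x)) ↔
      ((fun x : F => A.eval x) '' {x : F | B.eval x = 0} +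
        (fun x : F => g.eval x + A.eval (Bhat.eval x)) ''
          Set.range (fun x : F => B.eval x)) = Set.univ :=
  stmt_3_general p hp F hchar A B hA hB g Bhat hBhat
end

section
/- Let q = p^n, let A, B ∈ F_q[x] be additive polynomials, g ∈ F_q[x] arbitrary, and suppose f(x) = A(x) + g(B(x)) permutes F_q. Then A is injective on ker B, and the map f̂(x) = g(x) + A(B̂(x)) is injective on im B (where B̂ is a right inverse of B on im B). -/
/-- Corollary: if `f(x) = A(x) + g(B(x))` permutes `F_q`, then `A` is injective on
`ker B` and `f̂` is injective on `im B`. -/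
theorem stmt_4 (p n : ℕ) (hp : p.Prime) (hn : 0 < n)
    (F : Type*) [Field F] [Fintype F] (hq : Fintype.card F = p ^ n) (hchar : CharP F p)
    (A B : Polynomial F)
    (hA : ∃ (m : ℕ) (a : ℕ → F),
      A = ∑ i ∈ Finset.range m, Polynomial.C (a i) * Polynomial.X ^ (p ^ i))
    (hB : ∃ (m : ℕ) (a : ℕ → F),
      B = ∑ i ∈ Finset.range m, Polynomial.C (a i) * Polynomial.X ^ (p ^ i))
    (g : Polynomial F)
    (Bhat : Polynomial F)
    (hBhat : ∀ γ ∈ Set.range (fun x : F => B.eval x), B.eval (Bhat.eval γ) = γ)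
    (hf : Function.Bijective (fun x : F => A.eval x + g.eval (B.eval x))) :
    Set.InjOn (fun x : F => A.eval x) {x : F | B.eval x = 0} ∧
      Set.InjOn (fun x : F => g.eval x + A.eval (Bhat.eval x))
        (Set.range (fun x : F => B.eval x)) := by
  constructor
  · intro x hx y hy h
    apply hf.1
    simp only [Set.mem_setOf_eq] at hx hy
    simp only [hx, hy]
    simpa using h
  · intro γ hγ δ hδ h
    have h1 : Bhat.eval γ = Bhat.eval δ := by
      apply hf.1
      simp only [hBhat γ hγ, hBhat δ hδ]
      simp only at h
      linear_combination h
    calc γ = B.eval (Bhat.eval γ) := (hBhat γ hγ).symm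
    _ = B.eval (Bhat.eval δ) := by rw [h1]
    _ = δ := hBhat δ hδ
end

section
/- Let A, B ∈ F_q[x] be additive polynomials with A(B(α)) = B(A(α)) for all α ∈ F_q, and let g ∈ F_q[x]. Then f(x) = A(x) + g(B(x)) permutes F_q if and only if A permutes ker B and the map x ↦ A(x) + B(g(x)) permutes im B. -/
/-!
Put `f x = A x + g (B x)` and `h y = A y + B (g y)`. Since `B` is additive and commutes with
`A`, `B ∘ f = h ∘ B`, so `f` maps fibres of `B` to fibres of `B` as `h` dictates. On a fibre
`x + ker B` the map `f` is `A` up to a constant, because `g ∘ B` is constant there. Hence `f` is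
injective iff `A` is injective on `ker B` and `h` is injective on `im B`, and finiteness turns
all injectivity statements into bijectivity.
-/

open Function Set Polynomial

theorem Polynomial.eval_add_of_eq_sum_X_pow_expChar_pow {R : Type*} [CommSemiring R] {p : ℕ}
    [ExpChar R p] {P : R[X]}
    (hP : ∃ (m : ℕ) (a : ℕ → R), P = ∑ i ∈ Finset.range m, C (a i) * X ^ (p ^ i)) (x y : R) :
    P.eval (x + y) = P.eval x + P.eval y := by
  obtain ⟨m, a, rfl⟩ := hP
  simp only [eval_finsetSum, ← Finset.sum_add_distrib, eval_mul, eval_C, eval_pow, eval_X,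
    add_pow_expChar_pow, mul_add]

namespace AddMonoidHom

variable {V : Type*} [AddGroup V] (A B : V →+ V) (g : V → V)

theorem semiconj_add_comp (hAB : Function.Commute A B) :
    Semiconj B (fun x => A x + g (B x)) (fun y => A y + B (g y)) := fun x => by
  simp only [map_add, hAB x]

theorem bijOn_setOf_eq_zero_of_injective [Finite V] (hAB : Function.Commute A B)
    (hf : Injective fun x => A x + g (B x)) : BijOn A {x | B x = 0} {x | B x = 0} := by
  refine (toFinite _).injOn_iff_bijOn_of_mapsTo (fun x (hx : B x = 0) => ?_) |>.mp ?_
  · show B (A x) = 0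
    rw [← hAB x, hx, map_zero]
  · intro x (hx : B x = 0) y (hy : B y = 0) hxy
    apply hf
    simp only [hx, hy, hxy]

theorem bijOn_range_of_surjective [Finite V] (hAB : Function.Commute A B)
    (hf : Surjective fun x => A x + g (B x)) :
    BijOn (fun y => A y + B (g y)) (range B) (range B) :=
  have hsemi := semiconj_add_comp A B g hAB
  (toFinite _).surjOn_iff_bijOn_of_mapsTo hsemi.mapsTo_range |>.mp (hsemi.surjOn_range hf)

theorem injective_of_injOn (hAB : Function.Commute A B) (hker : InjOn A {x | B x = 0})
    (hrange : InjOn (fun y => A y + B (g y)) (range B)) : Injective fun x => A x + g (B x) := by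
  intro x y hxy
  have hsemi := semiconj_add_comp A B g hAB
  have hB : B x = B y := hrange ⟨x, rfl⟩ ⟨y, rfl⟩ (by rw [← hsemi x, ← hsemi y, hxy])
  have hA : A x = A y := by simpa only [hB, add_left_inj] using hxy
  have hsub : x - y = 0 :=
    hker (show B (x - y) = 0 by rw [map_sub, hB, sub_self])
      (show B 0 = 0 from map_zero B) (by rw [map_sub, hA, sub_self, map_zero])
  exact sub_eq_zero.mp hsub

theorem bijective_add_comp_iff [Finite V] (hAB : Function.Commute A B) :
    Bijective (fun x => A x + g (B x)) ↔
      BijOn A {x | B x = 0} {x | B x = 0} ∧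
        BijOn (fun y => A y + B (g y)) (range B) (range B) :=
  ⟨fun hf => ⟨bijOn_setOf_eq_zero_of_injective A B g hAB hf.injective,
      bijOn_range_of_surjective A B g hAB hf.surjective⟩,
    fun ⟨hker, hrange⟩ => Finite.injective_iff_bijective.mp
      (injective_of_injOn A B g hAB hker.injOn hrange.injOn)⟩

end AddMonoidHom

theorem stmt_6_general (p : ℕ) (hp : p.Prime)
    (F : Type*) [Field F] [Fintype F] (hchar : CharP F p)
    (A B : Polynomial F)
    (hA : ∃ (m : ℕ) (a : ℕ → F),
      A = ∑ i ∈ Finset.range m, Polynomial.C (a i) * Polynomial.X ^ (p ^ i))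
    (hB : ∃ (m : ℕ) (a : ℕ → F),
      B = ∑ i ∈ Finset.range m, Polynomial.C (a i) * Polynomial.X ^ (p ^ i))
    (hcomm : ∀ α : F, A.eval (B.eval α) = B.eval (A.eval α))
    (g : Polynomial F) :
    Function.Bijective (fun x : F => A.eval x + g.eval (B.eval x)) ↔
      (Set.BijOn (fun x : F => A.eval x) {x : F | B.eval x = 0} {x : F | B.eval x = 0} ∧
        Set.BijOn (fun x : F => A.eval x + B.eval (g.eval x))
          (Set.range (fun x : F => B.eval x)) (Set.range (fun x : F => B.eval x))) := by
  have : ExpChar F p := ExpChar.prime hp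
  exact AddMonoidHom.bijective_add_comp_iff
    (.mk' (A.eval ·) (eval_add_of_eq_sum_X_pow_expChar_pow hA))
    (.mk' (B.eval ·) (eval_add_of_eq_sum_X_pow_expChar_pow hB)) (g.eval ·) hcomm

/-- Corollary: if the additive polynomials `A` and `B` commute, then
`f(x) = A(x) + g(B(x))` permutes `F_q` iff `A` permutes `ker B` and
`x ↦ A(x) + B(g(x))` permutes `im B`. -/
theorem stmt_6 (p n : ℕ) (hp : p.Prime) (hn : 0 < n)
    (F : Type*) [Field F] [Fintype F] (hq : Fintype.card F = p ^ n) (hchar : CharP F p)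
    (A B : Polynomial F)
    (hA : ∃ (m : ℕ) (a : ℕ → F),
      A = ∑ i ∈ Finset.range m, Polynomial.C (a i) * Polynomial.X ^ (p ^ i))
    (hB : ∃ (m : ℕ) (a : ℕ → F),
      B = ∑ i ∈ Finset.range m, Polynomial.C (a i) * Polynomial.X ^ (p ^ i))
    (hcomm : ∀ α : F, A.eval (B.eval α) = B.eval (A.eval α))
    (g : Polynomial F) :
    Function.Bijective (fun x : F => A.eval x + g.eval (B.eval x)) ↔
      (Set.BijOn (fun x : F => A.eval x) {x : F | B.eval x = 0} {x : F | B.eval x = 0} ∧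
        Set.BijOn (fun x : F => A.eval x + B.eval (g.eval x))
          (Set.range (fun x : F => B.eval x)) (Set.range (fun x : F => B.eval x))) :=
  stmt_6_general p hp F hchar A B hA hB hcomm g
end

section
/- Let q = p^n, let B(x) = x^(q/p) + ... + x^p + x be the trace polynomial, let A ∈ F_p[x] be an additive polynomial, and let g ∈ F_q[x]. Then f(x) = A(x) + g(B(x)) permutes F_q if and only if A permutes ker B (the set of trace-zero elements) and the map x ↦ A(x) + Tr(g(x)) permutes F_p. -/
/-- For the trace polynomial `B`, an additive `A ∈ F_p[x]`, and any `g ∈ F_q[x]`,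
`f(x) = A(x) + g(B(x))` permutes `F_q` iff `A` permutes `ker B` and
`x ↦ A(x) + Tr(g(x))` permutes `F_p` (the prime field, i.e. `im B`). -/
theorem stmt_9 (p n : ℕ) (hp : p.Prime) (hn : 0 < n)
    (F : Type*) [Field F] [Fintype F] (hq : Fintype.card F = p ^ n) (hchar : CharP F p)
    (B : Polynomial F) (hBdef : B = ∑ i ∈ Finset.range n, Polynomial.X ^ (p ^ i))
    (A : Polynomial F)
    (hA : ∃ (m : ℕ) (a : ℕ → F), (∀ i, (a i) ^ p = a i) ∧
      A = ∑ i ∈ Finset.range m, Polynomial.C (a i) * Polynomial.X ^ (p ^ i))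
    (g : Polynomial F) :
    Function.Bijective (fun x : F => A.eval x + g.eval (B.eval x)) ↔
      (Set.BijOn (fun x : F => A.eval x) {x : F | B.eval x = 0} {x : F | B.eval x = 0} ∧
        Set.BijOn (fun x : F => A.eval x + B.eval (g.eval x))
          {x : F | x ^ p = x} {x : F | x ^ p = x}) := by
  haveI := Fact.mk hp
  obtain ⟨m, a, ha, hAdef⟩ := hA
  -- explicit evaluation formulas
  have hBe : ∀ x : F, B.eval x = ∑ i ∈ Finset.range n, x ^ p ^ i := by
    intro x; rw [hBdef]; simp [Polynomial.eval_finset_sum]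
  have hAe : ∀ x : F, A.eval x = ∑ j ∈ Finset.range m, a j * x ^ p ^ j := by
    intro x; rw [hAdef]; simp [Polynomial.eval_finset_sum]
  -- Frobenius iterates fix elements of the prime field
  have frobfix : ∀ (x : F), x ^ p = x → ∀ j, x ^ p ^ j = x := by
    intro x hx j
    induction j with
    | zero => simp
    | succ k ih => rw [pow_succ, pow_mul, ih, hx]
  have haj : ∀ i j, a i ^ p ^ j = a i := fun i j => frobfix _ (ha i) j
  -- sums commute with Frobenius iterates
  have powsum : ∀ (s : Finset ℕ) (f : ℕ → F) (i : ℕ),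
      (∑ j ∈ s, f j) ^ p ^ i = ∑ j ∈ s, (f j) ^ p ^ i := by
    intro s f i
    have h := map_sum (iterateFrobenius F p i) f s
    simp only [iterateFrobenius_def] at h
    exact h
  have hcardpow : ∀ x : F, x ^ p ^ n = x := by
    intro x; rw [← hq]; exact FiniteField.pow_card x
  -- additivity of B and A
  have Tadd : ∀ x y : F, B.eval (x + y) = B.eval x + B.eval y := by
    intro x y
    rw [hBe, hBe, hBe, ← Finset.sum_add_distrib]
    exact Finset.sum_congr rfl fun i _ => add_pow_char_pow ..
  have Tsub : ∀ x y : F, B.eval (x - y) = B.eval x - B.eval y := by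
    intro x y
    rw [hBe, hBe, hBe, ← Finset.sum_sub_distrib]
    exact Finset.sum_congr rfl fun i _ => sub_pow_char_pow ..
  have Asub : ∀ x y : F, A.eval (x - y) = A.eval x - A.eval y := by
    intro x y
    rw [hAe, hAe, hAe, ← Finset.sum_sub_distrib]
    refine Finset.sum_congr rfl fun j _ => ?_
    rw [sub_pow_char_pow, mul_sub]
  have T0 : B.eval 0 = 0 := by
    rw [hBe]
    exact Finset.sum_eq_zero fun i _ => zero_pow (pow_pos hp.pos i).ne'
  have A0 : A.eval 0 = 0 := by
    rw [hAe]
    exact Finset.sum_eq_zero fun j _ => by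
      rw [zero_pow (pow_pos hp.pos j).ne', mul_zero]
  -- image of B lies in the prime field
  have Tp : ∀ x : F, (B.eval x) ^ p = B.eval x := by
    intro x
    rw [hBe]
    have h1 : (∑ i ∈ Finset.range n, x ^ p ^ i) ^ p
        = ∑ i ∈ Finset.range n, x ^ p ^ (i + 1) := by
      have := powsum (Finset.range n) (fun i => x ^ p ^ i) 1
      rw [pow_one] at this
      rw [this]
      exact Finset.sum_congr rfl fun i _ => by
        rw [← pow_mul, ← pow_succ]
    have h2 : (∑ i ∈ Finset.range n, x ^ p ^ (i + 1)) + x ^ p ^ 0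
        = (∑ i ∈ Finset.range n, x ^ p ^ i) + x ^ p ^ n := by
      rw [← Finset.sum_range_succ' (fun i => x ^ p ^ i) n,
        Finset.sum_range_succ (fun i => x ^ p ^ i) n]
    rw [h1]
    rw [pow_zero, pow_one, hcardpow x] at h2
    exact add_right_cancel h2
  -- B and A commute
  have Tcomm : ∀ x : F, B.eval (A.eval x) = A.eval (B.eval x) := by
    intro x
    rw [hBe, hAe (B.eval x), hBe]
    have lhs : ∀ i : ℕ, (A.eval x) ^ p ^ i
        = ∑ j ∈ Finset.range m, a j * x ^ (p ^ j * p ^ i) := by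
      intro i
      rw [hAe, powsum]
      exact Finset.sum_congr rfl fun j _ => by
        rw [mul_pow, haj, pow_mul]
    simp only [lhs]
    rw [Finset.sum_comm]
    refine Finset.sum_congr rfl fun j _ => ?_
    rw [powsum, Finset.mul_sum]
    refine Finset.sum_congr rfl fun i _ => ?_
    rw [← pow_mul, mul_comm (p ^ i) (p ^ j)]
  -- A preserves the prime field
  have AP : ∀ x : F, x ^ p = x → (A.eval x) ^ p = A.eval x := by
    intro x hx
    have hAx : A.eval x = (∑ j ∈ Finset.range m, a j) * x := by
      rw [hAe, Finset.sum_mul]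
      exact Finset.sum_congr rfl fun j _ => by rw [frobfix x hx j]
    have hsum : (∑ j ∈ Finset.range m, a j) ^ p = ∑ j ∈ Finset.range m, a j := by
      have := powsum (Finset.range m) a 1
      rw [pow_one] at this
      rw [this]
      exact Finset.sum_congr rfl fun j _ => ha j
    rw [hAx, mul_pow, hsum, hx]
  -- B is surjective onto the prime field
  have Tsurj : ∀ t : F, t ^ p = t → ∃ x : F, B.eval x = t := by
    intro t ht
    have hx0 : ∃ x0 : F, B.eval x0 ≠ 0 := by
      by_contra hall
      push_neg at hall
      have hBne : B ≠ 0 := by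
        intro h0
        have hc : B.coeff (p ^ (n - 1)) = 1 := by
          rw [hBdef, Polynomial.finset_sum_coeff]
          rw [Finset.sum_eq_single (n - 1)]
          · simp [Polynomial.coeff_X_pow]
          · intro i hi hne
            rw [Polynomial.coeff_X_pow, if_neg]
            intro hpe
            exact hne (Nat.pow_right_injective hp.two_le hpe.symm)
          · intro h
            exact absurd (Finset.mem_range.mpr (by omega)) h
        rw [h0] at hc
        simp at hc
      apply hBne
      apply Polynomial.eq_zero_of_natDegree_lt_card_of_eval_eq_zero B
        Function.injective_id (fun x => hall x)
      have hdeg : B.natDegree ≤ p ^ (n - 1) := by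
        rw [hBdef]
        apply Polynomial.natDegree_sum_le_of_forall_le
        intro i hi
        rw [Polynomial.natDegree_X_pow]
        exact Nat.pow_le_pow_right hp.one_lt.le (by
          have := Finset.mem_range.mp hi; omega)
      calc B.natDegree ≤ p ^ (n - 1) := hdeg
        _ < p ^ n := Nat.pow_lt_pow_right hp.one_lt (by omega)
        _ = Fintype.card F := hq.symm
    obtain ⟨x0, hx0⟩ := hx0
    set s := B.eval x0 with hs
    have hsp : s ^ p = s := Tp x0
    set c := t / s with hc
    have hcp : c ^ p = c := by rw [hc, div_pow, ht, hsp]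
    refine ⟨c * x0, ?_⟩
    have hlin : B.eval (c * x0) = c * B.eval x0 := by
      rw [hBe, hBe, Finset.mul_sum]
      exact Finset.sum_congr rfl fun i _ => by
        rw [mul_pow, frobfix c hcp i]
    rw [hlin, ← hs, hc, div_mul_cancel₀ t hx0]
  -- key intertwining identity
  have key : ∀ x : F, B.eval (A.eval x + g.eval (B.eval x))
      = A.eval (B.eval x) + B.eval (g.eval (B.eval x)) := by
    intro x
    rw [Tadd, Tcomm]
  -- maps-to facts
  have MA : Set.MapsTo (fun x : F => A.eval x) {x : F | B.eval x = 0}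
      {x : F | B.eval x = 0} := by
    intro x hx
    simp only [Set.mem_setOf_eq] at hx ⊢
    rw [Tcomm, hx, A0]
  have Mh : Set.MapsTo (fun x : F => A.eval x + B.eval (g.eval x))
      {x : F | x ^ p = x} {x : F | x ^ p = x} := by
    intro x hx
    simp only [Set.mem_setOf_eq] at hx ⊢
    rw [add_pow_char, AP x hx, Tp]
  constructor
  · rintro ⟨finj, fsurj⟩
    constructor
    · -- A bijects the kernel
      refine ((Set.toFinite _).injOn_iff_bijOn_of_mapsTo MA).mp ?_
      intro x hx y hy hxy
      simp only [Set.mem_setOf_eq] at hx hy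
      have hxy' : Polynomial.eval x A = Polynomial.eval y A := hxy
      apply finj
      show Polynomial.eval x A + Polynomial.eval (Polynomial.eval x B) g
        = Polynomial.eval y A + Polynomial.eval (Polynomial.eval y B) g
      rw [hx, hy, hxy']
    · -- h bijects the prime field
      refine ((Set.toFinite _).surjOn_iff_bijOn_of_mapsTo Mh).mp ?_
      intro t ht
      simp only [Set.mem_setOf_eq] at ht
      obtain ⟨w, hw⟩ := Tsurj t ht
      obtain ⟨u, hu⟩ := fsurj w
      refine ⟨B.eval u, Tp u, ?_⟩
      have hu' : Polynomial.eval u A + Polynomial.eval (Polynomial.eval u B) g = w := hu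
      show Polynomial.eval (Polynomial.eval u B) A
        + Polynomial.eval (Polynomial.eval (Polynomial.eval u B) g) B = t
      rw [← key u, hu', hw]
  · rintro ⟨hK, hP⟩
    rw [← Finite.injective_iff_bijective]
    intro x y hxy
    have hxy' : Polynomial.eval x A + Polynomial.eval (Polynomial.eval x B) g
        = Polynomial.eval y A + Polynomial.eval (Polynomial.eval y B) g := hxy
    have h1 : B.eval x = B.eval y := by
      apply hP.injOn (Tp x) (Tp y)
      show Polynomial.eval (Polynomial.eval x B) A
          + Polynomial.eval (Polynomial.eval (Polynomial.eval x B) g) B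
        = Polynomial.eval (Polynomial.eval y B) A
          + Polynomial.eval (Polynomial.eval (Polynomial.eval y B) g) B
      rw [← key x, ← key y, hxy']
    have h2 : A.eval x = A.eval y := by
      rw [h1] at hxy'
      exact add_right_cancel hxy'
    have h3 : x - y ∈ {x : F | B.eval x = 0} := by
      simp only [Set.mem_setOf_eq, Tsub, h1, sub_self]
    have h4 : (0 : F) ∈ {x : F | B.eval x = 0} := by
      simp only [Set.mem_setOf_eq, T0]
    have h5 : x - y = 0 := hK.injOn h3 h4 (by simp only [Asub, h2, sub_self, A0])
    linear_combination h5
end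

section
/- Let p be a prime and let g ∈ F_{p^2}[x]. Then f(x) = x + g(x^p + x) permutes F_{p^2} if and only if the map x ↦ x + g(x)^p + g(x) permutes F_p. -/
/-!
Let `φ x = x ^ p + x`, the trace of `𝔽_{p²}` onto `𝔽_p = {x | x ^ p = x}`, and
`h y = y + g(y) ^ p + g(y)`. Additivity of `φ` gives `φ (x + g (φ x)) = h (φ x)`, i.e. `φ ∘ f = h ∘ φ`.
So if `f` is onto, so is `h` on `𝔽_p`; conversely, if `h` is injective on `𝔽_p`, then `f x = f y`
forces `φ x = φ y`, hence `g (φ x) = g (φ y)` and `x = y`. Finiteness upgrades both to bijections.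
-/

open Module

theorem bijective_add_comp_iff_bijOn {A B : Type*} [Add A] [IsRightCancelAdd A] [Finite A]
    {φ : A → B} {G : B → A} {h : B → B} {S : Set B} (hφ : Set.range φ = S)
    (hcomm : ∀ x, φ (x + G (φ x)) = h (φ x)) :
    Function.Bijective (fun x => x + G (φ x)) ↔ Set.BijOn h S S := by
  subst hφ
  have hmaps : Set.MapsTo h (Set.range φ) (Set.range φ) := by
    rintro _ ⟨x, rfl⟩
    exact ⟨_, hcomm x⟩
  constructor
  · intro hf
    refine ((Set.finite_range φ).surjOn_iff_bijOn_of_mapsTo hmaps).1 ?_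
    rintro _ ⟨z, rfl⟩
    obtain ⟨x, rfl⟩ := hf.2 z
    exact ⟨φ x, ⟨x, rfl⟩, (hcomm x).symm⟩
  · intro hh
    refine Finite.injective_iff_bijective.1 fun x y hxy => ?_
    have hφxy : φ x = φ y :=
      hh.injOn ⟨x, rfl⟩ ⟨y, rfl⟩ (by rw [← hcomm, ← hcomm]; exact congrArg φ hxy)
    simp only [hφxy] at hxy
    exact add_right_cancel hxy

theorem FiniteField.range_pow_card_add_self {K L : Type*} [Field K] [Field L] [Finite L]
    [Algebra K L] (h : finrank K L = 2) :
    Set.range (fun x : L => x ^ Nat.card K + x) = Set.range (algebraMap K L) := by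
  have : Finite K := Finite.of_injective _ (FaithfulSMul.algebraMap_injective K L)
  have htrace : (fun x : L => x ^ Nat.card K + x) = algebraMap K L ∘ Algebra.trace K L := by
    ext x
    simp [FiniteField.algebraMap_trace_eq_sum_pow, h, Finset.sum_range_succ, add_comm]
  rw [htrace, Set.range_comp, (Algebra.trace_surjective K L).range_eq, Set.image_univ]

theorem ZMod.range_castHom_eq_setOf_pow_eq_self (F : Type*) [Field F] (p : ℕ) [Fact p.Prime]
    [CharP F p] : Set.range (ZMod.castHom dvd_rfl F : ZMod p → F) = {x : F | x ^ p = x} := by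
  ext x
  rw [Set.mem_ofPred_eq, ← Subfield.mem_bot_iff_pow_eq_self F p, ← fieldRange_castHom_eq_bot p]
  rfl

theorem FiniteField.finrank_zmod_of_card_eq_pow {F : Type*} [Field F] [Fintype F] {p n : ℕ}
    [Fact p.Prime] [Algebra (ZMod p) F] (hq : Fintype.card F = p ^ n) :
    finrank (ZMod p) F = n := by
  have hcard := Module.card_eq_pow_finrank (K := ZMod p) (V := F)
  rw [hq, ZMod.card] at hcard
  exact (Nat.pow_right_injective (Fact.out : p.Prime).two_le hcard).symm

/-- Over `F_{p^2}`, `f(x) = x + g(x^p + x)` permutes `F_{p^2}` iff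
`x ↦ x + g(x)^p + g(x)` permutes `F_p`. -/
theorem stmt_10 (p : ℕ) (hp : p.Prime)
    (F : Type*) [Field F] [Fintype F] (hq : Fintype.card F = p ^ 2) (hchar : CharP F p)
    (g : Polynomial F) :
    Function.Bijective (fun x : F => x + g.eval (x ^ p + x)) ↔
      Set.BijOn (fun x : F => x + (g.eval x) ^ p + g.eval x)
        {x : F | x ^ p = x} {x : F | x ^ p = x} := by
  have := Fact.mk hp
  let := ZMod.algebra F p
  have hrange : Set.range (fun x : F => x ^ p + x) = {x : F | x ^ p = x} := by
    have h := FiniteField.range_pow_card_add_self (FiniteField.finrank_zmod_of_card_eq_pow hq)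
    rw [Nat.card_zmod] at h
    exact h.trans (ZMod.range_castHom_eq_setOf_pow_eq_self F p)
  refine bijective_add_comp_iff_bijOn (G := g.eval) hrange fun x => ?_
  simp only [add_pow_char]
  ring
end

section
/- Let p be a prime, h ∈ F_p[x], and γ ∈ F_{p^2} with γ^(p-1) = -1. Then f(x) = x + γ·h(x^p + x) permutes F_{p^2}. -/
/-- If `γ ∈ F_{p^2}` satisfies `γ^(p-1) = -1` and `h` has coefficients in `F_p`,
then `x + γ·h(x^p + x)` permutes `F_{p^2}`. -/
theorem stmt_11 (p : ℕ) (hp : p.Prime)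
    (F : Type*) [Field F] [Fintype F] (hq : Fintype.card F = p ^ 2) (hchar : CharP F p)
    (h : Polynomial F) (hh : ∀ i, (h.coeff i) ^ p = h.coeff i)
    (γ : F) (hγ : γ ^ (p - 1) = -1) :
    Function.Bijective (fun x : F => x + γ * h.eval (x ^ p + x)) := by
  haveI : Fact p.Prime := ⟨hp⟩
  -- x ^ (p^2) = x
  have hpow : ∀ x : F, x ^ p ^ 2 = x := fun x => by
    rw [← hq]; exact FiniteField.pow_card x
  -- γ ^ p = -γ
  have hγp : γ ^ p = -γ := by
    have hb : p - 1 + 1 = p := Nat.succ_pred_eq_of_pos hp.pos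
    rw [← hb, pow_succ, hγ]; ring
  -- h.map frobenius = h
  have hmap : h.map (frobenius F p) = h := by
    ext i
    simp [Polynomial.coeff_map, frobenius_def, hh]
  -- (h.eval c)^p = h.eval (c^p)
  have heval : ∀ c : F, (h.eval c) ^ p = h.eval (c ^ p) := by
    intro c
    have := Polynomial.eval₂_at_apply (p := h) (frobenius F p) c
    rw [Polynomial.eval₂_eq_eval_map, hmap] at this
    simpa [frobenius_def] using this.symm
  -- key identity: f(x)^p + f(x) = x^p + x
  have key : ∀ x : F, (x + γ * h.eval (x ^ p + x)) ^ p + (x + γ * h.eval (x ^ p + x))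
      = x ^ p + x := by
    intro x
    have hc : (x ^ p + x) ^ p = x ^ p + x := by
      rw [add_pow_char, ← pow_mul, ← pow_two, hpow]; ring
    rw [add_pow_char, mul_pow, hγp, heval, hc]
    ring
  rw [Fintype.bijective_iff_injective_and_card]
  refine ⟨fun a b hab => ?_, rfl⟩
  simp only at hab
  have h1 : a ^ p + a = b ^ p + b := by
    rw [← key a, ← key b, hab]
  have h2 : γ * h.eval (a ^ p + a) = γ * h.eval (b ^ p + b) := by rw [h1]
  have := hab
  rw [h2] at this
  exact add_right_cancel this
end

section
/- For every odd prime p, there exists γ ∈ F_{p^2} with γ^(p-1) = -1, and for any such γ the polynomial f(x) = x + γ·(x^p + x)^2 permutes F_{p^2}. -/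
/-!
Write `T x = x ^ p + x` for the trace of `F = 𝔽_{p²}` over `𝔽_p`. Since `γ ^ p = -γ`, the trace
kills `γ • 𝔽_p`, and `T x ∈ 𝔽_p`, so `f x = x + γ (T x)²` satisfies `T (f x) = T x`. Hence
`f x = f y` forces `T x = T y`, and then `x = y`. For odd `p` a `γ` exists because `-1` is a
`(p - 1)`-th power: raise a nonsquare `a` to the power `(p² - 1) / (2 (p - 1))`, as Euler's
criterion gives `a ^ ((p² - 1) / 2) = -1`.
-/

theorem Function.injective_add_comp_of_comp_eq {G α : Type*} [AddGroup G] (T : G → α) (h : α → G)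
    (hT : ∀ x, T (x + h (T x)) = T x) : Function.Injective fun x => x + h (T x) := by
  intro x y (hxy : x + h (T x) = y + h (T y))
  have hTxy : T x = T y := by simpa only [hT] using congrArg T hxy
  rw [hTxy] at hxy
  exact add_right_cancel hxy

theorem FiniteField.exists_pow_eq_neg_one_of_dvd {F : Type*} [Field F] [Fintype F] {n : ℕ}
    (hn : n ∣ Fintype.card F / 2) : ∃ γ : F, γ ^ n = -1 := by
  by_cases hF : ringChar F = 2
  · exact ⟨1, by rw [one_pow, neg_one_eq_one_iff.mpr hF]⟩
  obtain ⟨a, ha⟩ := FiniteField.exists_nonsquare hF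
  have ha0 : a ≠ 0 := by rintro rfl; exact ha .zero
  have euler : a ^ (Fintype.card F / 2) = -1 :=
    (FiniteField.pow_dichotomy hF ha0).resolve_left (mt (FiniteField.isSquare_iff hF ha0).mpr ha)
  obtain ⟨m, hm⟩ := hn
  exact ⟨a ^ m, by rw [← pow_mul, mul_comm, ← hm, euler]⟩

theorem Nat.Prime.sub_one_dvd_sq_div_two {p : ℕ} (hp : p.Prime) : p - 1 ∣ p ^ 2 / 2 := by
  rcases hp.eq_two_or_odd' with rfl | ⟨k, rfl⟩
  · norm_num
  · refine ⟨k + 1, ?_⟩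
    rw [Nat.add_sub_cancel, show (2 * k + 1) ^ 2 = 2 * (2 * k * (k + 1)) + 1 by ring]
    omega

theorem pow_char_mul_add_self_eq_zero {R : Type*} [CommRing R] {p : ℕ} {γ s : R}
    (hγ : γ ^ p = -γ) (hs : s ^ p = s) : (γ * s) ^ p + γ * s = 0 := by
  rw [mul_pow, hγ, hs, neg_mul, neg_add_cancel]

theorem FiniteField.pow_pow_eq_self_of_card_eq_sq {F : Type*} [Field F] [Fintype F] {p : ℕ}
    (hq : Fintype.card F = p ^ 2) (x : F) : (x ^ p) ^ p = x := by
  rw [← pow_mul, ← sq, ← hq, FiniteField.pow_card]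

section TraceOverPrimeField

variable {F : Type*} [Field F] {p : ℕ} [Fact p.Prime] [CharP F p]

theorem pow_char_add_pow_char (x y : F) : (x + y) ^ p + (x + y) = (x ^ p + x) + (y ^ p + y) := by
  rw [add_pow_char]; ring

variable [Fintype F] (hq : Fintype.card F = p ^ 2)
include hq

theorem pow_char_add_self_pow_char (x : F) : (x ^ p + x) ^ p = x ^ p + x := by
  rw [add_pow_char, FiniteField.pow_pow_eq_self_of_card_eq_sq hq, add_comm]

theorem pow_char_add_self_add_mul_sq {γ : F} (hγ : γ ^ p = -γ) (x : F) :
    (x + γ * (x ^ p + x) ^ 2) ^ p + (x + γ * (x ^ p + x) ^ 2) = x ^ p + x := by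
  have hs : ((x ^ p + x) ^ 2) ^ p = (x ^ p + x) ^ 2 := by
    rw [← pow_mul, mul_comm, pow_mul, pow_char_add_self_pow_char hq]
  rw [pow_char_add_pow_char, pow_char_mul_add_self_eq_zero hγ hs, add_zero]

end TraceOverPrimeField

theorem stmt_12_general (p : ℕ) (hp : p.Prime)
    (F : Type*) [Field F] [Fintype F] (hq : Fintype.card F = p ^ 2) (hchar : CharP F p) :
    (∃ γ : F, γ ^ (p - 1) = -1) ∧
      ∀ γ : F, γ ^ (p - 1) = -1 →
        Function.Bijective (fun x : F => x + γ * (x ^ p + x) ^ 2) := by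
  have : Fact p.Prime := ⟨hp⟩
  refine ⟨FiniteField.exists_pow_eq_neg_one_of_dvd (hq ▸ hp.sub_one_dvd_sq_div_two), ?_⟩
  intro γ hγ
  have hγp : γ ^ p = -γ := by
    rw [← Nat.sub_one_add_one hp.ne_zero, pow_succ, hγ, neg_one_mul]
  exact Finite.injective_iff_bijective.mp <|
    Function.injective_add_comp_of_comp_eq (fun x => x ^ p + x) (fun t => γ * t ^ 2)
      (pow_char_add_self_add_mul_sq hq hγp)

/-- For odd `p` there exists `γ ∈ F_{p^2}` with `γ^(p-1) = -1`, and for any such `γ`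
the polynomial `x + γ·(x^p + x)^2` permutes `F_{p^2}`. -/
theorem stmt_12 (p : ℕ) (hp : p.Prime) (hodd : Odd p)
    (F : Type*) [Field F] [Fintype F] (hq : Fintype.card F = p ^ 2) (hchar : CharP F p) :
    (∃ γ : F, γ ^ (p - 1) = -1) ∧
      ∀ γ : F, γ ^ (p - 1) = -1 →
        Function.Bijective (fun x : F => x + γ * (x ^ p + x) ^ 2) :=
  stmt_12_general p hp F hq hchar
end

section
/- Let q = p^n, B the trace polynomial x^(q/p) + ... + x, g ∈ F_q[x], A ∈ F_p[x] additive, h ∈ F_p[x]. If f(x) = g(B(x)) + h(B(x))·A(x) permutes F_q and q > p, then h has no roots in F_p and A is injective on ker B. -/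
/-!
`B` is the absolute trace of `F` over `𝔽_p`, so it maps `F` onto `𝔽_p`, and since `q > p` its
kernel contains some `β ≠ 0`. If `h(c) = 0` for some `c ∈ 𝔽_p`, pick `α` with `B(α) = c`; then
`f(α + β) = g(c) = f(α)`, contradicting injectivity. On `ker B` the permutation `f` is
`x ↦ g(0) + h(0)·A(x)`, so `A` is injective there.
-/

open Polynomial

section PermutationShape

variable {R : Type*} [Ring R] {T G H A : R → R}

theorem apply_ne_zero_of_injective_add_mul
    (hf : Function.Injective fun x => G (T x) + H (T x) * A x)
    {α β : R} (hβ : β ≠ 0) (hT : T (α + β) = T α) : H (T α) ≠ 0 := by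
  intro hH
  have hfix : G (T (α + β)) + H (T (α + β)) * A (α + β) = G (T α) + H (T α) * A α := by
    rw [hT, hH, zero_mul, zero_mul]
  exact hβ (add_eq_left.mp (hf hfix))

theorem injOn_fiber_of_injective_add_mul
    (hf : Function.Injective fun x => G (T x) + H (T x) * A x) (c : R) :
    Set.InjOn A {x | T x = c} := by
  intro x hx y hy hxy
  apply hf
  simp only [Set.mem_ofPred_eq] at hx hy
  simp only [hx, hy, hxy]

end PermutationShape

namespace FiniteField

variable {p : ℕ} [Fact p.Prime] {F : Type*} [Field F] [Fintype F] [Algebra (ZMod p) F]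

theorem finrank_zmod_eq_of_card_eq {n : ℕ} (hq : Fintype.card F = p ^ n) :
    Module.finrank (ZMod p) F = n := by
  apply Nat.pow_right_injective (Fact.out : p.Prime).two_le
  simp only [← hq, Module.card_eq_pow_finrank (K := ZMod p) (V := F), ZMod.card]

theorem eval_sum_X_pow_char_pow {n : ℕ} (hq : Fintype.card F = p ^ n) (x : F) :
    (∑ i ∈ Finset.range n, X ^ p ^ i : F[X]).eval x =
      algebraMap (ZMod p) F (Algebra.trace (ZMod p) F x) := by
  rw [algebraMap_trace_eq_sum_pow, finrank_zmod_eq_of_card_eq hq, Nat.card_zmod, eval_finsetSum]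
  simp only [eval_pow, eval_X]

theorem exists_algebraMap_trace_eq {c : F} (hc : c ^ p = c) :
    ∃ x : F, algebraMap (ZMod p) F (Algebra.trace (ZMod p) F x) = c := by
  have : CharP F p := charP_of_injective_algebraMap (algebraMap (ZMod p) F).injective p
  rw [← Subfield.mem_bot_iff_pow_eq_self, Subfield.bot_eq_of_zMod_algebra p] at hc
  obtain ⟨k, rfl⟩ := hc
  obtain ⟨x, rfl⟩ := Algebra.trace_surjective (ZMod p) F k
  exact ⟨x, rfl⟩

theorem exists_ne_zero_trace_eq_zero (hcard : p < Fintype.card F) :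
    ∃ β : F, β ≠ 0 ∧ Algebra.trace (ZMod p) F β = 0 := by
  obtain ⟨x, y, hxy, htr⟩ := Fintype.exists_ne_map_eq_of_card_lt (Algebra.trace (ZMod p) F)
    (by rwa [ZMod.card])
  exact ⟨x - y, sub_ne_zero.mpr hxy, by rw [map_sub, htr, sub_self]⟩

end FiniteField

theorem stmt_14_general (p n : ℕ) (hp : p.Prime)
    (F : Type*) [Field F] [Fintype F] (hq : Fintype.card F = p ^ n) (hchar : CharP F p)
    (B : Polynomial F) (hBdef : B = ∑ i ∈ Finset.range n, Polynomial.X ^ (p ^ i))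
    (g : Polynomial F)
    (A : Polynomial F)
    (h : Polynomial F)
    (hcard : p < Fintype.card F)
    (hf : Function.Bijective
      (fun x : F => g.eval (B.eval x) + h.eval (B.eval x) * A.eval x)) :
    (∀ x : F, x ^ p = x → h.eval x ≠ 0) ∧
      Set.InjOn (fun x : F => A.eval x) {x : F | B.eval x = 0} := by
  have : Fact p.Prime := ⟨hp⟩
  let := ZMod.algebra F p
  have hB (x : F) : B.eval x = algebraMap (ZMod p) F (Algebra.trace (ZMod p) F x) := by
    rw [hBdef, FiniteField.eval_sum_X_pow_char_pow hq]
  refine ⟨fun c hc => ?_, injOn_fiber_of_injective_add_mul (T := B.eval) (G := g.eval)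
    (H := h.eval) hf.injective 0⟩
  obtain ⟨α, rfl⟩ := FiniteField.exists_algebraMap_trace_eq hc
  obtain ⟨β, hβ, hβtr⟩ := FiniteField.exists_ne_zero_trace_eq_zero hcard
  rw [← hB]
  exact apply_ne_zero_of_injective_add_mul (T := B.eval) (G := g.eval) (H := h.eval)
    (A := A.eval) hf.injective hβ
    (by rw [hB, hB, map_add, hβtr, add_zero])

/-- If `f(x) = g(B(x)) + h(B(x))·A(x)` permutes `F_q` and `q > p`, then `h` has no
roots in `F_p` and `A` is injective on `ker B`. -/
theorem stmt_14 (p n : ℕ) (hp : p.Prime) (hn : 0 < n)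
    (F : Type*) [Field F] [Fintype F] (hq : Fintype.card F = p ^ n) (hchar : CharP F p)
    (B : Polynomial F) (hBdef : B = ∑ i ∈ Finset.range n, Polynomial.X ^ (p ^ i))
    (g : Polynomial F)
    (A : Polynomial F)
    (hA : ∃ (m : ℕ) (a : ℕ → F), (∀ i, (a i) ^ p = a i) ∧
      A = ∑ i ∈ Finset.range m, Polynomial.C (a i) * Polynomial.X ^ (p ^ i))
    (h : Polynomial F) (hh : ∀ i, (h.coeff i) ^ p = h.coeff i)
    (hcard : p < Fintype.card F)
    (hf : Function.Bijective
      (fun x : F => g.eval (B.eval x) + h.eval (B.eval x) * A.eval x)) :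
    (∀ x : F, x ^ p = x → h.eval x ≠ 0) ∧
      Set.InjOn (fun x : F => A.eval x) {x : F | B.eval x = 0} :=
  stmt_14_general p n hp F hq hchar B hBdef g A h hcard hf
end

section
/- Let q be an odd prime power, let i, j be positive integers with gcd(ij, q-1) = 1, and let a, b ∈ F_q^* be such that 2a and 2b are nonzero squares in F_q. Then f(x) = a·x^i·(x^((q-1)/2) + 1) - b·x^j·(x^((q-1)/2) - 1) permutes F_q. -/
/-!
By Euler's criterion `χ x = x ^ (q / 2)` is the quadratic character of `F`, and `f` equals
`2a x^i` on the squares and `2b x^j` on the nonsquares. As `2a`, `2b` are squares and `i`, `j`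
are odd (being prime to the even number `q - 1`), `χ (f x) = χ x`: so `f` cannot identify a square
with a nonsquare, and on each class it is injective because `x ↦ x ^ n` is injective for `n`
prime to `q - 1`.
-/

open Function

namespace FiniteField

variable {F : Type*} [Field F] [Fintype F]

theorem pow_injective_of_coprime {n : ℕ} (hn0 : n ≠ 0)
    (hn : n.Coprime (Fintype.card F - 1)) : Injective (· ^ n : F → F) := by
  have hunits : Injective (· ^ n : Fˣ → Fˣ) :=
    (Nat.Coprime.pow_left_bijective <| by
      rwa [Nat.card_units, Nat.card_eq_fintype_card, Nat.coprime_comm]).injective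
  intro x y hxy
  rcases eq_or_ne x 0 with rfl | hx
  · exact ((pow_eq_zero_iff hn0).mp ((zero_pow hn0).symm.trans hxy).symm).symm
  rcases eq_or_ne y 0 with rfl | hy
  · exact (pow_eq_zero_iff hn0).mp (hxy.trans (zero_pow hn0))
  simpa using congrArg Units.val
    (hunits (a₁ := Units.mk0 x hx) (a₂ := Units.mk0 y hy) (Units.ext (by simpa using hxy)))

theorem card_div_two_ne_zero : Fintype.card F / 2 ≠ 0 :=
  (Nat.div_pos Fintype.one_lt_card two_pos).ne'

theorem injective_of_pow_card_div_two_eq (hF : ringChar F ≠ 2) {f g h : F → F}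
    (hχ : ∀ x, f x ^ (Fintype.card F / 2) = x ^ (Fintype.card F / 2))
    (hg : Injective g) (hfg : ∀ x, x ^ (Fintype.card F / 2) = 1 → f x = g x)
    (hh : Injective h) (hfh : ∀ x, x ^ (Fintype.card F / 2) = -1 → f x = h x) :
    Injective f := by
  intro x y hxy
  have hχxy : x ^ (Fintype.card F / 2) = y ^ (Fintype.card F / 2) := by
    rw [← hχ x, ← hχ y, hxy]
  rcases eq_or_ne x 0 with rfl | hx
  · rw [zero_pow card_div_two_ne_zero, eq_comm, pow_eq_zero_iff card_div_two_ne_zero] at hχxy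
    exact hχxy.symm
  rcases pow_dichotomy hF hx with hsq | hnsq
  · exact hg (by rw [← hfg x hsq, ← hfg y (hχxy ▸ hsq), hxy])
  · exact hh (by rw [← hfh x hnsq, ← hfh y (hχxy ▸ hnsq), hxy])

theorem pow_card_div_two_mul_pow (hF : ringChar F ≠ 2) {c : F} (hc : IsSquare c) (hc0 : c ≠ 0)
    {n : ℕ} (hn : Odd n) {x : F} (hx : x ≠ 0) :
    (c * x ^ n) ^ (Fintype.card F / 2) = x ^ (Fintype.card F / 2) := by
  rw [mul_pow, (isSquare_iff hF hc0).mp hc, one_mul, ← pow_mul, mul_comm, pow_mul]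
  rcases pow_dichotomy hF hx with h | h <;> rw [h]
  · exact one_pow n
  · exact hn.neg_one_pow

end FiniteField

open FiniteField in
theorem stmt_15_general (F : Type*) [Field F] [Fintype F] (hodd : Odd (Fintype.card F))
    (i j : ℕ) (hi : 0 < i) (hj : 0 < j)
    (hgcd : Nat.gcd (i * j) (Fintype.card F - 1) = 1)
    (a b : F)
    (ha2 : ∃ y : F, y ≠ 0 ∧ y ^ 2 = 2 * a)
    (hb2 : ∃ y : F, y ≠ 0 ∧ y ^ 2 = 2 * b) :
    Function.Bijective
      (fun x : F => a * x ^ i * (x ^ ((Fintype.card F - 1) / 2) + 1)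
        - b * x ^ j * (x ^ ((Fintype.card F - 1) / 2) - 1)) := by
  obtain ⟨c, hc, hca⟩ := ha2
  obtain ⟨d, hd, hdb⟩ := hb2
  have hq := Nat.odd_iff.mp hodd
  have hF : ringChar F ≠ 2 := fun h => by have := even_card_of_char_two h; omega
  have hci : i.Coprime (Fintype.card F - 1) :=
    Nat.Coprime.coprime_dvd_left (dvd_mul_right i j) hgcd
  have hcj : j.Coprime (Fintype.card F - 1) :=
    Nat.Coprime.coprime_dvd_left (dvd_mul_left j i) hgcd
  have htwo : 2 ∣ Fintype.card F - 1 := by omega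
  rw [show (Fintype.card F - 1) / 2 = Fintype.card F / 2 by omega]
  set e := Fintype.card F / 2
  have hfg (x : F) (hx : x ^ e = 1) :
      a * x ^ i * (x ^ e + 1) - b * x ^ j * (x ^ e - 1) = 2 * a * x ^ i := by
    rw [hx]; ring
  have hfh (x : F) (hx : x ^ e = -1) :
      a * x ^ i * (x ^ e + 1) - b * x ^ j * (x ^ e - 1) = 2 * b * x ^ j := by
    rw [hx]; ring
  have h2a : 2 * a ≠ 0 := hca ▸ pow_ne_zero 2 hc
  have h2b : 2 * b ≠ 0 := hdb ▸ pow_ne_zero 2 hd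
  refine Finite.injective_iff_bijective.mp <| injective_of_pow_card_div_two_eq hF ?_
    ((mul_right_injective₀ h2a).comp (pow_injective_of_coprime hi.ne' hci)) hfg
    ((mul_right_injective₀ h2b).comp (pow_injective_of_coprime hj.ne' hcj)) hfh
  intro x
  rcases eq_or_ne x 0 with rfl | hx
  · simp [hi.ne', hj.ne']
  rcases pow_dichotomy hF hx with hsq | hnsq
  · rw [hfg x hsq, pow_card_div_two_mul_pow hF ⟨c, hca ▸ sq c⟩ h2a
      (hci.coprime_dvd_right htwo).symm.odd_of_left hx]
  · rw [hfh x hnsq, pow_card_div_two_mul_pow hF ⟨d, hdb ▸ sq d⟩ h2b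
      (hcj.coprime_dvd_right htwo).symm.odd_of_left hx]

/-- Hermite's example: if `gcd(ij, q-1) = 1` and `2a`, `2b` are nonzero squares, then
`a x^i (x^((q-1)/2) + 1) - b x^j (x^((q-1)/2) - 1)` permutes `F_q` (`q` odd). -/
theorem stmt_15 (F : Type*) [Field F] [Fintype F] (hodd : Odd (Fintype.card F))
    (i j : ℕ) (hi : 0 < i) (hj : 0 < j)
    (hgcd : Nat.gcd (i * j) (Fintype.card F - 1) = 1)
    (a b : F) (ha : a ≠ 0) (hb : b ≠ 0)
    (ha2 : ∃ y : F, y ≠ 0 ∧ y ^ 2 = 2 * a)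
    (hb2 : ∃ y : F, y ≠ 0 ∧ y ^ 2 = 2 * b) :
    Function.Bijective
      (fun x : F => a * x ^ i * (x ^ ((Fintype.card F - 1) / 2) + 1)
        - b * x ^ j * (x ^ ((Fintype.card F - 1) / 2) - 1)) :=
  stmt_15_general F hodd i j hi hj hgcd a b ha2 hb2
end

section
/- Let q be a prime power, d a divisor of q-1, u a positive integer with gcd(u, (q-1)/d) = 1, and h ∈ F_q[x]. Suppose there exist b ∈ F_q^* and an integer k such that h(ζ) = b·ζ^k for all ζ ∈ μ_d, where b is a d-th power in F_q^* and gcd(d, u + k(q-1)/d) = 1. Then f(x) = x^u·h(x^((q-1)/d)) permutes F_q. -/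
/-- If `h(ζ) = b ζ^k` for all `ζ ∈ μ_d`, with `b` a nonzero `d`-th power,
`gcd(u, (q-1)/d) = 1` and `gcd(d, u + k(q-1)/d) = 1`, then
`f(x) = x^u h(x^((q-1)/d))` permutes `F_q`. -/
theorem stmt_16 (F : Type*) [Field F] [Fintype F] (d u : ℕ) (k : ℤ)
    (hd : d ∣ Fintype.card F - 1) (hu : 0 < u)
    (hgcdu : Nat.gcd u ((Fintype.card F - 1) / d) = 1)
    (h : Polynomial F) (b : F) (hb : b ≠ 0)
    (hbd : ∃ y : F, y ≠ 0 ∧ y ^ d = b)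
    (hval : ∀ ζ : F, ζ ^ d = 1 → h.eval ζ = b * ζ ^ k)
    (hgcdd : Int.gcd ((u : ℤ) + k * (((Fintype.card F - 1) / d : ℕ) : ℤ)) d = 1) :
    Function.Bijective
      (fun x : F => x ^ u * h.eval (x ^ ((Fintype.card F - 1) / d))) := by
  classical
  set q1 := Fintype.card F - 1 with hq1
  set s := q1 / d with hs
  have hcard : 1 < Fintype.card F := Fintype.one_lt_card
  have hq1pos : 0 < q1 := by omega
  have hd0 : d ≠ 0 := by rintro rfl; rw [Nat.eq_zero_of_zero_dvd hd] at hq1pos; omega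
  have hsd : s * d = q1 := Nat.div_mul_cancel hd
  set N : ℤ := (u : ℤ) + k * (s : ℤ) with hN
  have hcardu : Fintype.card Fˣ = q1 := by rw [Fintype.card_units]
  -- gcd(N, q1) = 1
  have hNgcd : Int.gcd N (q1 : ℤ) = 1 := by
    have h1 : IsCoprime N (d : ℤ) := Int.isCoprime_iff_gcd_eq_one.mpr hgcdd
    have h2 : IsCoprime N (s : ℤ) := by
      have h0 : IsCoprime (u : ℤ) (s : ℤ) := by
        rw [Int.isCoprime_iff_gcd_eq_one, Int.gcd_natCast_natCast]; exact hgcdu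
      have := h0.add_mul_left_left k
      rwa [mul_comm (s : ℤ) k] at this
    have h3 : IsCoprime N ((s : ℤ) * (d : ℤ)) := h2.mul_right h1
    rw [Int.isCoprime_iff_gcd_eq_one] at h3
    rwa [← Nat.cast_mul, hsd] at h3
  -- key formula on units
  have key : ∀ x : Fˣ, (x : F) ^ u * h.eval ((x : F) ^ s) = b * ((x ^ N : Fˣ) : F) := by
    intro x
    have hx1 : (x : F) ^ q1 = 1 := FiniteField.pow_card_sub_one_eq_one (x : F) x.ne_zero
    have hζ : ((x : F) ^ s) ^ d = 1 := by rw [← pow_mul, hsd, hx1]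
    have e1 : x ^ u * (x ^ s) ^ k = x ^ N := by
      rw [hN, zpow_add, zpow_natCast, mul_comm k (s : ℤ), zpow_mul, zpow_natCast]
    rw [hval _ hζ, ← e1]
    push_cast
    ring
  -- reduce to injectivity
  rw [Fintype.bijective_iff_injective_and_card]
  refine ⟨?_, rfl⟩
  intro x y hxy
  simp only at hxy
  have f0 : ∀ z : F, z ≠ 0 → z ^ u * h.eval (z ^ s) ≠ 0 := by
    intro z hz
    lift z to Fˣ using isUnit_iff_ne_zero.mpr hz
    rw [key z]
    exact mul_ne_zero hb (z ^ N).ne_zero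
  by_cases hx : x = 0
  · by_cases hy : y = 0
    · rw [hx, hy]
    · exfalso
      apply f0 y hy
      rw [← hxy, hx, zero_pow hu.ne', zero_mul]
  · by_cases hy : y = 0
    · exfalso
      apply f0 x hx
      rw [hxy, hy, zero_pow hu.ne', zero_mul]
    · lift x to Fˣ using isUnit_iff_ne_zero.mpr hx
      lift y to Fˣ using isUnit_iff_ne_zero.mpr hy
      rw [key x, key y] at hxy
      have hxy' : x ^ N = y ^ N := Units.ext (mul_left_cancel₀ hb hxy)
      have h1 : (x * y⁻¹) ^ N = 1 := by
        rw [mul_zpow, inv_zpow, hxy', mul_inv_cancel]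
      have h2 : orderOf (x * y⁻¹) ∣ N.natAbs := by
        have := orderOf_dvd_iff_zpow_eq_one.mpr h1
        have h3 := Int.natAbs_dvd_natAbs.mpr this
        simpa using h3
      have h3 : orderOf (x * y⁻¹) ∣ q1 := hcardu ▸ orderOf_dvd_card
      have h4 : orderOf (x * y⁻¹) ∣ 1 := by
        have := Nat.dvd_gcd h2 h3
        rwa [show Nat.gcd N.natAbs q1 = 1 from hNgcd ▸ rfl] at this
      have h5 : x * y⁻¹ = 1 := by
        rw [← orderOf_eq_one_iff]; exact Nat.dvd_one.mp h4
      have : x = y := mul_inv_eq_one.mp h5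
      rw [this]
end
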